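/- Let A and B be unital ℂ-algebras with involutions, Ξ an (A,B)-bimodule as in the context, and for ν = 1,2 let δ_ν, d_ν, ∇_ν be derivations and connections as in the context. Write δ̄ := δ₁ + i·δ₂ on A and ∇̄ := ∇₁ + i·∇₂ on Ξ. Suppose η ∈ Ξ is such that ⟨η,η⟩_B is invertible in B, and set p := A⟨η·⟨η,η⟩_B⁻¹, η⟩. Then δ̄(p)·p = 0 if and only if there exists b ∈ B with ∇̄η = η·b. -/

import Mathlib

/-- An (A,B)-bimodule with compatible A-valued and B-valued hermitian pairings,
as in the Morita-equivalence picture for noncommutative tori. -/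
structure HermitianBimodule (A B Ξ : Type*) [Ring A] [Ring B]
    [Algebra ℂ A] [Algebra ℂ B] [StarRing A] [StarRing B]
    [AddCommGroup Ξ] [Module ℂ Ξ] where
  /-- the left action of `A` -/
  smulA : A → Ξ → Ξ
  /-- the right action of `B` -/
  smulB : Ξ → B → Ξ
  /-- the `A`-valued pairing `A⟨·,·⟩` -/
  ipA : Ξ → Ξ → A
  /-- the `B`-valued pairing `⟨·,·⟩_B` -/
  ipB : Ξ → Ξ → B
  -- left A-module axioms, ℂ-bilinear
  smulA_add : ∀ (a : A) (f g : Ξ), smulA a (f + g) = smulA a f + smulA a g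
  add_smulA : ∀ (a b : A) (f : Ξ), smulA (a + b) f = smulA a f + smulA b f
  mul_smulA : ∀ (a b : A) (f : Ξ), smulA (a * b) f = smulA a (smulA b f)
  one_smulA : ∀ f : Ξ, smulA 1 f = f
  smulA_complex : ∀ (c : ℂ) (a : A) (f : Ξ), smulA a (c • f) = c • smulA a f
  complex_smulA : ∀ (c : ℂ) (a : A) (f : Ξ), smulA (c • a) f = c • smulA a f
  -- right B-module axioms, ℂ-bilinear
  smulB_add : ∀ (f g : Ξ) (b : B), smulB (f + g) b = smulB f b + smulB g b
  add_smulB : ∀ (f : Ξ) (b c : B), smulB f (b + c) = smulB f b + smulB f c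
  mul_smulB : ∀ (f : Ξ) (b c : B), smulB f (b * c) = smulB (smulB f b) c
  smulB_one : ∀ f : Ξ, smulB f 1 = f
  smulB_complex : ∀ (c : ℂ) (f : Ξ) (b : B), smulB (c • f) b = c • smulB f b
  complex_smulB : ∀ (c : ℂ) (f : Ξ) (b : B), smulB f (c • b) = c • smulB f b
  -- bimodule compatibility
  smulA_smulB : ∀ (a : A) (f : Ξ) (b : B), smulB (smulA a f) b = smulA a (smulB f b)
  -- the A-valued pairing: ℂ-linear in the first variable, conjugate-linear in the second
  ipA_add_left : ∀ f g h : Ξ, ipA (f + g) h = ipA f h + ipA g h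
  ipA_add_right : ∀ f g h : Ξ, ipA f (g + h) = ipA f g + ipA f h
  ipA_smul_left : ∀ (c : ℂ) (f g : Ξ), ipA (c • f) g = c • ipA f g
  ipA_smul_right : ∀ (c : ℂ) (f g : Ξ), ipA f (c • g) = (starRingEnd ℂ c) • ipA f g
  ipA_smulA : ∀ (a : A) (f g : Ξ), ipA (smulA a f) g = a * ipA f g
  ipA_smulB : ∀ (f : Ξ) (b : B) (g : Ξ), ipA (smulB f b) g = ipA f (smulB g (star b))
  ipA_star : ∀ f g : Ξ, star (ipA f g) = ipA g f
  -- the B-valued pairing: conjugate-linear in the first variable, ℂ-linear in the second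
  ipB_add_left : ∀ f g h : Ξ, ipB (f + g) h = ipB f h + ipB g h
  ipB_add_right : ∀ f g h : Ξ, ipB f (g + h) = ipB f g + ipB f h
  ipB_smul_left : ∀ (c : ℂ) (f g : Ξ), ipB (c • f) g = (starRingEnd ℂ c) • ipB f g
  ipB_smul_right : ∀ (c : ℂ) (f g : Ξ), ipB f (c • g) = c • ipB f g
  ipB_smulB_right : ∀ (f g : Ξ) (b : B), ipB f (smulB g b) = ipB f g * b
  ipB_smulB_left : ∀ (f : Ξ) (b : B) (g : Ξ), ipB (smulB f b) g = star b * ipB f g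
  ipB_star : ∀ f g : Ξ, star (ipB f g) = ipB g f
  -- associativity of the two pairings
  assoc : ∀ f g h : Ξ, smulB f (ipB g h) = smulA (ipA f g) h

/-!
With `q = ⟨η,η⟩_B` and `ξ = η·q⁻¹` one has `⟨η,ξ⟩_B = 1`, so right multiplication by
`p = A⟨ξ,η⟩` fixes every `A⟨f,η⟩`. Since the `A`-valued pairing is conjugate-linear in its second
slot, `δ̄` pairs `∇̄` on the left with `∇₁ - i∇₂` on the right, and the Leibniz rules together with
`d̄(q⁻¹) = -q⁻¹ d̄(q) q⁻¹` collapse `δ̄(p)·p` to `A⟨(∇̄η - η·q⁻¹⟨η,∇̄η⟩_B)·q⁻¹, η⟩`.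
As `f·q = A⟨f,η⟩·η`, this vanishes iff `∇̄η = η·q⁻¹⟨η,∇̄η⟩_B`, i.e. iff `∇̄η ∈ η·B`.
-/

open Complex

theorem map_ringInverse_of_leibniz {R : Type*} [Ring R] {D : R → R}
    (hD : ∀ x y, D (x * y) = D x * y + x * D y) {q : R} (hq : IsUnit q) :
    D (Ring.inverse q) = -(Ring.inverse q * D q * Ring.inverse q) := by
  obtain ⟨u, rfl⟩ := hq
  have hD1 : D 1 = 0 := by simpa using hD 1 1
  have h : D u * ↑u⁻¹ + u * D ↑u⁻¹ = 0 := by rw [← hD, Units.mul_inv, hD1]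
  rw [Ring.inverse_unit]
  calc D ↑u⁻¹ = ↑u⁻¹ * (u * D ↑u⁻¹) := by rw [← mul_assoc, Units.inv_mul, one_mul]
    _ = -(↑u⁻¹ * D u * ↑u⁻¹) := by rw [eq_neg_of_add_eq_zero_right h, mul_neg, mul_assoc]

theorem leibniz_add_I_smul {R : Type*} [Ring R] [Algebra ℂ R] {D₀ D₁ : R → R}
    (h₀ : ∀ x y, D₀ (x * y) = D₀ x * y + x * D₀ y)
    (h₁ : ∀ x y, D₁ (x * y) = D₁ x * y + x * D₁ y) (x y : R) :
    D₀ (x * y) + I • D₁ (x * y) = (D₀ x + I • D₁ x) * y + x * (D₀ y + I • D₁ y) := by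
  rw [h₀, h₁, add_mul, mul_add, smul_mul_assoc, mul_smul_comm, smul_add]
  abel

namespace HermitianBimodule

variable {A B Ξ : Type*} [Ring A] [Ring B] [Algebra ℂ A] [Algebra ℂ B] [StarRing A] [StarRing B]
  [AddCommGroup Ξ] [Module ℂ Ξ] (M : HermitianBimodule A B Ξ)

theorem smulB_zero_left (b : B) : M.smulB 0 b = 0 :=
  (AddMonoidHom.mk' (M.smulB · b) fun f g => M.smulB_add f g b).map_zero

theorem smulB_sub_left (f g : Ξ) (b : B) : M.smulB (f - g) b = M.smulB f b - M.smulB g b :=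
  (AddMonoidHom.mk' (M.smulB · b) fun f g => M.smulB_add f g b).map_sub f g

theorem smulB_neg_right (f : Ξ) (b : B) : M.smulB f (-b) = -M.smulB f b :=
  (AddMonoidHom.mk' (M.smulB f) (M.add_smulB f)).map_neg b

theorem smulA_zero_left (f : Ξ) : M.smulA 0 f = 0 :=
  (AddMonoidHom.mk' (M.smulA · f) fun a b => M.add_smulA a b f).map_zero

theorem ipA_zero_left (g : Ξ) : M.ipA 0 g = 0 :=
  (AddMonoidHom.mk' (M.ipA · g) fun f h => M.ipA_add_left f h g).map_zero

theorem ipA_mul_ipA (f g h k : Ξ) : M.ipA f g * M.ipA h k = M.ipA (M.smulB f (M.ipB g h)) k := by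
  rw [← M.ipA_smulA, M.assoc]

theorem smulB_eq_zero_iff_of_isUnit {f : Ξ} {u : B} (hu : IsUnit u) : M.smulB f u = 0 ↔ f = 0 := by
  obtain ⟨u, rfl⟩ := hu
  refine ⟨fun h => ?_, fun h => h ▸ M.smulB_zero_left u⟩
  rw [← M.smulB_one f, ← u.mul_inv, M.mul_smulB, h, M.smulB_zero_left]

theorem ipA_eq_zero_iff_of_isUnit {η : Ξ} (hη : IsUnit (M.ipB η η)) {f : Ξ} :
    M.ipA f η = 0 ↔ f = 0 := by
  refine ⟨fun h => ?_, fun h => h ▸ M.ipA_zero_left η⟩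
  rw [← M.smulB_eq_zero_iff_of_isUnit hη, M.assoc, h, M.smulA_zero_left]

theorem exists_eq_smulB_iff {η : Ξ} (hη : IsUnit (M.ipB η η)) {g : Ξ} :
    (∃ b, g = M.smulB η b) ↔ g = M.smulB η (Ring.inverse (M.ipB η η) * M.ipB η g) := by
  refine ⟨?_, fun h => ⟨_, h⟩⟩
  rintro ⟨b, rfl⟩
  rw [M.ipB_smulB_right, ← mul_assoc, Ring.inverse_mul_cancel _ hη, one_mul]

theorem conn_add_I_smul_smulB {d₀ d₁ : B → B} {conn₀ conn₁ : Ξ → Ξ}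
    (h₀ : ∀ f b, conn₀ (M.smulB f b) = M.smulB (conn₀ f) b + M.smulB f (d₀ b))
    (h₁ : ∀ f b, conn₁ (M.smulB f b) = M.smulB (conn₁ f) b + M.smulB f (d₁ b)) (f : Ξ) (b : B) :
    conn₀ (M.smulB f b) + I • conn₁ (M.smulB f b) =
      M.smulB (conn₀ f + I • conn₁ f) b + M.smulB f (d₀ b + I • d₁ b) := by
  rw [h₀, h₁, M.smulB_add, M.add_smulB, M.smulB_complex, M.complex_smulB, smul_add]
  abel

theorem map_ipA_add_I_smul {δ₀ δ₁ : A → A} {conn₀ conn₁ : Ξ → Ξ}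
    (h₀ : ∀ f g, δ₀ (M.ipA f g) = M.ipA (conn₀ f) g + M.ipA f (conn₀ g))
    (h₁ : ∀ f g, δ₁ (M.ipA f g) = M.ipA (conn₁ f) g + M.ipA f (conn₁ g)) (f g : Ξ) :
    δ₀ (M.ipA f g) + I • δ₁ (M.ipA f g) =
      M.ipA (conn₀ f + I • conn₁ f) g + M.ipA f (conn₀ g + (-I) • conn₁ g) := by
  rw [h₀, h₁, M.ipA_add_left, M.ipA_add_right, M.ipA_smul_left, M.ipA_smul_right, map_neg,
    conj_I, neg_neg, smul_add]
  abel

theorem map_ipB_add_I_smul {d₀ d₁ : B → B} {conn₀ conn₁ : Ξ → Ξ}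
    (h₀ : ∀ f g, d₀ (M.ipB f g) = M.ipB (conn₀ f) g + M.ipB f (conn₀ g))
    (h₁ : ∀ f g, d₁ (M.ipB f g) = M.ipB (conn₁ f) g + M.ipB f (conn₁ g)) (f g : Ξ) :
    d₀ (M.ipB f g) + I • d₁ (M.ipB f g) =
      M.ipB (conn₀ f + (-I) • conn₁ f) g + M.ipB f (conn₀ g + I • conn₁ g) := by
  rw [h₀, h₁, M.ipB_add_left, M.ipB_add_right, M.ipB_smul_left, M.ipB_smul_right, map_neg,
    conj_I, neg_neg, smul_add]
  abel

noncomputable def rieffelProjection (η : Ξ) : A :=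
  M.ipA (M.smulB η (Ring.inverse (M.ipB η η))) η

section Connection

variable {δ : A → A} {d : B → B} {conn conn' : Ξ → Ξ}

theorem map_rieffelProjection_mul
    (hd : ∀ x y, d (x * y) = d x * y + x * d y)
    (hconn : ∀ f b, conn (M.smulB f b) = M.smulB (conn f) b + M.smulB f (d b))
    (hA : ∀ f g, δ (M.ipA f g) = M.ipA (conn f) g + M.ipA f (conn' g))
    (hB : ∀ f g, d (M.ipB f g) = M.ipB (conn' f) g + M.ipB f (conn g))
    {η : Ξ} (hη : IsUnit (M.ipB η η)) :
    δ (M.rieffelProjection η) * M.rieffelProjection η =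
      M.ipA (M.smulB (conn η - M.smulB η (Ring.inverse (M.ipB η η) * M.ipB η (conn η)))
        (Ring.inverse (M.ipB η η))) η := by
  set q := M.ipB η η
  set ξ := M.smulB η (Ring.inverse q)
  have hηξ : M.ipB η ξ = 1 := by rw [M.ipB_smulB_right, Ring.mul_inverse_cancel _ hη]
  have hdq : d (Ring.inverse q) + Ring.inverse q * M.ipB (conn' η) η * Ring.inverse q =
      -(Ring.inverse q * M.ipB η (conn η) * Ring.inverse q) := by
    rw [map_ringInverse_of_leibniz hd hη, hB]
    noncomm_ring
  calc δ (M.ipA ξ η) * M.ipA ξ η = M.ipA (conn ξ + M.smulB ξ (M.ipB (conn' η) ξ)) η := by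
        rw [hA, add_mul, M.ipA_mul_ipA, M.ipA_mul_ipA, hηξ, M.smulB_one, M.ipA_add_left]
    _ = _ := by
        rw [hconn, M.ipB_smulB_right, ← M.mul_smulB, add_assoc, ← M.add_smulB, ← mul_assoc, hdq,
          M.smulB_neg_right, M.smulB_sub_left, M.mul_smulB, ← M.mul_smulB η, sub_eq_add_neg]

theorem map_rieffelProjection_mul_eq_zero_iff
    (hd : ∀ x y, d (x * y) = d x * y + x * d y)
    (hconn : ∀ f b, conn (M.smulB f b) = M.smulB (conn f) b + M.smulB f (d b))
    (hA : ∀ f g, δ (M.ipA f g) = M.ipA (conn f) g + M.ipA f (conn' g))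
    (hB : ∀ f g, d (M.ipB f g) = M.ipB (conn' f) g + M.ipB f (conn g))
    {η : Ξ} (hη : IsUnit (M.ipB η η)) :
    δ (M.rieffelProjection η) * M.rieffelProjection η = 0 ↔ ∃ b, conn η = M.smulB η b := by
  rw [M.map_rieffelProjection_mul hd hconn hA hB hη, M.ipA_eq_zero_iff_of_isUnit hη,
    M.smulB_eq_zero_iff_of_isUnit hη.ringInverse, sub_eq_zero, M.exists_eq_smulB_iff hη]

end Connection

end HermitianBimodule

theorem self_duality_iff_linear_equation_general
    {A B Ξ : Type*} [Ring A] [Ring B]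
    [Algebra ℂ A] [Algebra ℂ B] [StarRing A] [StarRing B]
    [AddCommGroup Ξ] [Module ℂ Ξ]
    (M : HermitianBimodule A B Ξ)
    (δ : Fin 2 → A → A) (d : Fin 2 → B → B) (conn : Fin 2 → Ξ → Ξ)
    (hd_leibniz : ∀ ν (x y : B), d ν (x * y) = d ν x * y + x * d ν y)
    (hconn_leibniz : ∀ ν (f : Ξ) (b : B),
      conn ν (M.smulB f b) = M.smulB (conn ν f) b + M.smulB f (d ν b))
    (hcompatA : ∀ ν (f g : Ξ),
      δ ν (M.ipA f g) = M.ipA (conn ν f) g + M.ipA f (conn ν g))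
    (hcompatB : ∀ ν (f g : Ξ),
      d ν (M.ipB f g) = M.ipB (conn ν f) g + M.ipB f (conn ν g))
    (δbar : A → A) (hδbar : ∀ x : A, δbar x = δ 0 x + Complex.I • δ 1 x)
    (connbar : Ξ → Ξ) (hconnbar : ∀ f : Ξ, connbar f = conn 0 f + Complex.I • conn 1 f)
    (η : Ξ) (hη : IsUnit (M.ipB η η))
    (p : A) (hpdef : p = M.ipA (M.smulB η (Ring.inverse (M.ipB η η))) η) :
    δbar p * p = 0 ↔ ∃ b : B, connbar η = M.smulB η b := by
  obtain rfl : δbar = fun x => δ 0 x + I • δ 1 x := funext hδbar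
  obtain rfl : connbar = fun f => conn 0 f + I • conn 1 f := funext hconnbar
  subst hpdef
  exact M.map_rieffelProjection_mul_eq_zero_iff (δ := fun x => δ 0 x + I • δ 1 x)
    (d := fun x => d 0 x + I • d 1 x)
    (conn' := fun f => conn 0 f + (-I) • conn 1 f)
    (leibniz_add_I_smul (hd_leibniz 0) (hd_leibniz 1))
    (M.conn_add_I_smul_smulB (hconn_leibniz 0) (hconn_leibniz 1))
    (M.map_ipA_add_I_smul (hcompatA 0) (hcompatA 1))
    (M.map_ipB_add_I_smul (hcompatB 0) (hcompatB 1)) hη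

/-- Self-duality of the Rieffel-type projection is equivalent to a linear
equation on the module: with `δ̄ = δ₁ + i·δ₂`, `∇̄ = ∇₁ + i·∇₂` and
`p = A⟨η·⟨η,η⟩_B⁻¹, η⟩` (for `⟨η,η⟩_B` invertible),
`δ̄(p)·p = 0` iff `∇̄η = η·b` for some `b ∈ B`. -/
theorem self_duality_iff_linear_equation
    {A B Ξ : Type*} [Ring A] [Ring B]
    [Algebra ℂ A] [Algebra ℂ B] [StarRing A] [StarRing B]
    [StarModule ℂ A] [StarModule ℂ B]
    [AddCommGroup Ξ] [Module ℂ Ξ]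
    (M : HermitianBimodule A B Ξ)
    (δ : Fin 2 → A → A) (d : Fin 2 → B → B) (conn : Fin 2 → Ξ → Ξ)
    (hδ_add : ∀ ν (x y : A), δ ν (x + y) = δ ν x + δ ν y)
    (hδ_smul : ∀ ν (c : ℂ) (x : A), δ ν (c • x) = c • δ ν x)
    (hδ_leibniz : ∀ ν (x y : A), δ ν (x * y) = δ ν x * y + x * δ ν y)
    (hd_add : ∀ ν (x y : B), d ν (x + y) = d ν x + d ν y)
    (hd_smul : ∀ ν (c : ℂ) (x : B), d ν (c • x) = c • d ν x)
    (hd_leibniz : ∀ ν (x y : B), d ν (x * y) = d ν x * y + x * d ν y)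
    (hconn_add : ∀ ν (f g : Ξ), conn ν (f + g) = conn ν f + conn ν g)
    (hconn_smul : ∀ ν (c : ℂ) (f : Ξ), conn ν (c • f) = c • conn ν f)
    (hconn_leibniz : ∀ ν (f : Ξ) (b : B),
      conn ν (M.smulB f b) = M.smulB (conn ν f) b + M.smulB f (d ν b))
    (hcompatA : ∀ ν (f g : Ξ),
      δ ν (M.ipA f g) = M.ipA (conn ν f) g + M.ipA f (conn ν g))
    (hcompatB : ∀ ν (f g : Ξ),
      d ν (M.ipB f g) = M.ipB (conn ν f) g + M.ipB f (conn ν g))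
    (δbar : A → A) (hδbar : ∀ x : A, δbar x = δ 0 x + Complex.I • δ 1 x)
    (connbar : Ξ → Ξ) (hconnbar : ∀ f : Ξ, connbar f = conn 0 f + Complex.I • conn 1 f)
    (η : Ξ) (hη : IsUnit (M.ipB η η))
    (p : A) (hpdef : p = M.ipA (M.smulB η (Ring.inverse (M.ipB η η))) η) :
    δbar p * p = 0 ↔ ∃ b : B, connbar η = M.smulB η b :=
  self_duality_iff_linear_equation_general M δ d conn hd_leibniz hconn_leibniz hcompatA hcompatB
    δbar hδbar connbar hconnbar η hη p hpdef
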